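/- arXiv:2408.03206 — 2 statements merged into one kernel-verified Lean document; each statement's English description precedes it below -/
import Mathlib

section
/- If F is a Minkowski norm on ℝⁿ (positive on nonzero vectors, 1-positively-homogeneous, smooth away from 0, with positive definite fundamental tensor g_v at each v ≠ 0), then F satisfies the triangle inequality F(v+u) ≤ F(v) + F(u) for all v, u ≠ 0, with equality if and only if v = λu for some λ > 0. -/
/-- The fundamental tensor of `F`: half the Hessian of `F²` at `v`, evaluated on `(u, w)`. -/
noncomputable def fundTensor {m : ℕ} (F : (Fin m → ℝ) → ℝ) (v u w : Fin m → ℝ) : ℝ :=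
  (1 / 2) * deriv (fun δ : ℝ => deriv (fun η : ℝ => (F (v + δ • u + η • w)) ^ 2) 0) 0

lemma deriv2_shift (f : ℝ → ℝ) (t₀ : ℝ) :
    deriv (fun δ : ℝ => deriv (fun η : ℝ => f (t₀ + δ + η)) 0) 0 = deriv (deriv f) t₀ := by
  have h1 : (fun δ : ℝ => deriv (fun η : ℝ => f (t₀ + δ + η)) 0) =
      fun δ : ℝ => deriv f (t₀ + δ) := by
    funext δ
    rw [deriv_comp_const_add f (t₀ + δ) 0, add_zero]
  rw [h1, deriv_comp_const_add (deriv f) t₀ 0, add_zero]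

lemma fundTensor_line {m : ℕ} (F : (Fin m → ℝ) → ℝ) (A w : Fin m → ℝ) (t₀ : ℝ) :
    fundTensor F (A + t₀ • w) w w =
      (1 / 2) * deriv (deriv (fun t : ℝ => (F (A + t • w)) ^ 2)) t₀ := by
  unfold fundTensor
  rw [← deriv2_shift (fun t : ℝ => (F (A + t • w)) ^ 2) t₀]
  have h : (fun δ : ℝ => deriv (fun η : ℝ => (F (A + t₀ • w + δ • w + η • w)) ^ 2) 0) =
      fun δ : ℝ => deriv (fun η : ℝ => (F (A + (t₀ + δ + η) • w)) ^ 2) 0 := by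
    funext δ
    congr 1
    funext η
    congr 2
    module
  rw [h]

lemma key_lt {m : ℕ} (F : (Fin m → ℝ) → ℝ)
    (hpos : ∀ v : Fin m → ℝ, v ≠ 0 → 0 < F v)
    (hF0 : F 0 = 0)
    (hcont : ContinuousOn (fun v => (F v) ^ 2) {(0 : Fin m → ℝ)}ᶜ)
    (hposdef : ∀ v : Fin m → ℝ, v ≠ 0 → ∀ u : Fin m → ℝ, u ≠ 0 →
      0 < fundTensor F v u u)
    (A B : Fin m → ℝ) (hFA : F A = 1) (hFB : F B = 1) (hAB : A ≠ B)
    (hanti : ∀ μ : ℝ, 0 < μ → A ≠ (-μ) • B)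
    (t : ℝ) (ht : t ∈ Set.Ioo (0:ℝ) 1) :
    F ((1 - t) • A + t • B) < 1 := by
  have hFA0 : A ≠ 0 := by
    intro h; rw [h, hF0] at hFA; norm_num at hFA
  have hFB0 : B ≠ 0 := by
    intro h; rw [h, hF0] at hFB; norm_num at hFB
  have hw : B - A ≠ 0 := sub_ne_zero.mpr (Ne.symm hAB)
  -- nonvanishing of the segment
  have nonvanish : ∀ s ∈ Set.Icc (0:ℝ) 1, A + s • (B - A) ≠ 0 := by
    intro s hs h0
    rcases eq_or_lt_of_le hs.1 with h0s | h0s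
    · rw [← h0s] at h0; simp at h0; exact hFA0 h0
    rcases eq_or_lt_of_le hs.2 with h1s | h1s
    · rw [h1s] at h0
      apply hFB0
      rw [show B = A + (1:ℝ) • (B - A) by module]
      exact h0
    -- interior : A = (-(s/(1-s))) • B
    have h1s' : (0:ℝ) < 1 - s := by linarith
    have h3 : (1 - s) • A = (-s) • B := by
      have he : (1 - s) • A + s • B = A + s • (B - A) := by module
      rw [h0] at he
      have := eq_neg_of_add_eq_zero_left he
      rw [this]; module
    have h4 : A = (-(s / (1 - s))) • B := by
      have := congrArg (fun x => (1 - s)⁻¹ • x) h3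
      simp only [smul_smul] at this
      rw [inv_mul_cancel₀ h1s'.ne', one_smul] at this
      rw [this]
      congr 1
      field_simp
    exact hanti (s / (1 - s)) (div_pos h0s h1s') h4
  -- the restricted squared norm
  set Φ : ℝ → ℝ := fun s => (F (A + s • (B - A))) ^ 2 with hΦ
  have contγ : Continuous fun s : ℝ => A + s • (B - A) := by fun_prop
  have contΦ : ContinuousOn Φ (Set.Icc 0 1) := by
    apply hcont.comp contγ.continuousOn
    intro s hs
    simpa using nonvanish s hs
  have strict : StrictConvexOn ℝ (Set.Icc (0:ℝ) 1) Φ := by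
    apply strictConvexOn_of_deriv2_pos (convex_Icc _ _) contΦ
    intro x hx
    rw [interior_Icc] at hx
    have hne := nonvanish x ⟨hx.1.le, hx.2.le⟩
    have hpd := hposdef _ hne _ hw
    rw [fundTensor_line F A (B - A) x] at hpd
    have : (deriv^[2] Φ) x = deriv (deriv Φ) x := rfl
    rw [this]
    linarith
  have hΦ0 : Φ 0 = 1 := by simp [hΦ, hFA]
  have hΦ1 : Φ 1 = 1 := by
    have : A + (1:ℝ) • (B - A) = B := by module
    simp [hΦ, this, hFB]
  have h2 := strict.2 (Set.left_mem_Icc.mpr zero_le_one)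
      (Set.right_mem_Icc.mpr zero_le_one) (zero_ne_one)
      (by linarith [ht.2] : (0:ℝ) < 1 - t) ht.1 (by ring)
  have he : (1 - t) • (0:ℝ) + t • (1:ℝ) = t := by simp
  rw [he, hΦ0, hΦ1] at h2
  have h3 : Φ t < 1 := by
    simp only [smul_eq_mul, mul_one] at h2; linarith
  have heq : (1 - t) • A + t • B = A + t • (B - A) := by module
  rw [heq]
  have hp := hpos _ (nonvanish t ⟨ht.1.le, ht.2.le⟩)
  simp only [hΦ] at h3
  nlinarith [h3, hp]

/-- A Minkowski norm satisfies the triangle inequality, with equality iff the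
two vectors are positively proportional. -/
theorem stmt3 {m : ℕ} (F : (Fin m → ℝ) → ℝ)
    (hpos : ∀ v : Fin m → ℝ, v ≠ 0 → 0 < F v)
    (hhom : ∀ v : Fin m → ℝ, ∀ lam : ℝ, 0 < lam → F (lam • v) = lam * F v)
    (hsmooth : ContDiffOn ℝ (⊤ : ℕ∞) F {(0 : Fin m → ℝ)}ᶜ)
    (hC2 : ContDiffOn ℝ 2 (fun v => (F v) ^ 2) {(0 : Fin m → ℝ)}ᶜ)
    (hposdef : ∀ v : Fin m → ℝ, v ≠ 0 → ∀ u : Fin m → ℝ, u ≠ 0 →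
      0 < fundTensor F v u u) :
    ∀ v u : Fin m → ℝ, v ≠ 0 → u ≠ 0 →
      F (v + u) ≤ F v + F u ∧
      (F (v + u) = F v + F u ↔ ∃ lam : ℝ, 0 < lam ∧ v = lam • u) := by
  have hF0 : F 0 = 0 := by
    have h := hhom 0 2 (by norm_num)
    rw [smul_zero] at h
    linarith
  intro v u hv hu
  have hFv := hpos v hv
  have hFu := hpos u hu
  set c := F v + F u with hc
  have hcpos : 0 < c := by positivity
  set A : Fin m → ℝ := (F v)⁻¹ • v with hA
  set B : Fin m → ℝ := (F u)⁻¹ • u with hB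
  have hFA : F A = 1 := by
    rw [hA, hhom v (F v)⁻¹ (inv_pos.mpr hFv)]
    field_simp
  have hFB : F B = 1 := by
    rw [hB, hhom u (F u)⁻¹ (inv_pos.mpr hFu)]
    field_simp
  set t : ℝ := F u / c with htdef
  have ht0 : 0 < t := div_pos hFu hcpos
  have ht1 : t < 1 := by rw [htdef, div_lt_one hcpos]; linarith
  have hdecomp : c • ((1 - t) • A + t • B) = v + u := by
    rw [hA, hB, htdef, hc]
    match_scalars <;> field_simp <;> ring
  have hγ : F (v + u) = c * F ((1 - t) • A + t • B) := by
    rw [← hdecomp, hhom _ c hcpos]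
  by_cases hAB : A = B
  · -- positively proportional: equality
    have hP : (1 - t) • A + t • B = A := by rw [← hAB]; module
    have hFP : F ((1 - t) • A + t • B) = 1 := by rw [hP, hFA]
    constructor
    · rw [hγ, hFP]; linarith
    constructor
    · intro _
      refine ⟨F v * (F u)⁻¹, by positivity, ?_⟩
      have h1 : v = (F v) • A := by
        rw [hA, smul_smul, mul_inv_cancel₀ hFv.ne', one_smul]
      rw [hAB, hB, smul_smul] at h1
      exact h1
    · intro _
      rw [hγ, hFP]; ring
  · -- not positively proportional: strict inequality
    have hnl : ¬∃ lam : ℝ, 0 < lam ∧ v = lam • u := by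
      rintro ⟨l, hl, rfl⟩
      apply hAB
      rw [hA, hB, hhom u l hl, smul_smul]
      congr 1
      field_simp
    have hlt : F ((1 - t) • A + t • B) < 1 := by
      by_cases hanti : ∃ μ : ℝ, 0 < μ ∧ A = (-μ) • B
      · obtain ⟨μ, hμ, hAeq⟩ := hanti
        have hnB : F ((-1 : ℝ) • B) = μ⁻¹ := by
          have h1 : F (μ • ((-1 : ℝ) • B)) = μ * F ((-1 : ℝ) • B) :=
            hhom _ μ hμ
          have h2 : μ • ((-1 : ℝ) • B) = A := by rw [hAeq]; module
          rw [h2, hFA] at h1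
          field_simp at h1 ⊢
          linarith
        set k : ℝ := t - (1 - t) * μ with hk
        have hP : (1 - t) • A + t • B = k • B := by
          rw [hAeq, hk]; module
        rw [hP]
        rcases lt_trichotomy k 0 with hk0 | hk0 | hk0
        · have h5 : k • B = (-k) • ((-1 : ℝ) • B) := by module
          rw [h5, hhom _ (-k) (by linarith), hnB]
          rw [show -k * μ⁻¹ = -k / μ by ring, div_lt_one hμ, hk]
          nlinarith [mul_pos ht0 hμ]
        · rw [hk0]; simp [hF0]
        · rw [hhom _ k hk0, hFB]
          nlinarith
      · push_neg at hanti
        exact key_lt F hpos hF0 hC2.continuousOn hposdef A B hFA hFB hAB hanti t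
          ⟨ht0, ht1⟩
    constructor
    · rw [hγ]; nlinarith
    · constructor
      · intro heq
        rw [hγ] at heq
        nlinarith
      · intro h; exact absurd h hnl
end

section
/- Let F be a Minkowski norm on ℝⁿ with positive definite fundamental tensor. Then the map v ↦ g_v(v,·) (the Legendre transform restricted to nonzero vectors) is injective on the indicatrix Σ = {v : F(v) = 1} up to rescaling; in particular, for each covector ω ≠ 0 with ω(v) > 0 for some v, there is at most one v ∈ Σ with g_v(v,·) proportional to ω with positive factor. -/
section Aux

variable {m : ℕ}

private lemma myLineDeriv {G : (Fin m → ℝ) → ℝ} (hG : ContDiffOn ℝ (⊤ : ℕ∞) G {(0 : Fin m → ℝ)}ᶜ)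
    (p u : Fin m → ℝ) (t₀ : ℝ) (h : p + t₀ • u ≠ 0) :
    HasDerivAt (fun t : ℝ => G (p + t • u)) (fderiv ℝ G (p + t₀ • u) u) t₀ := by
  have hd : DifferentiableAt ℝ G (p + t₀ • u) :=
    (hG.contDiffAt (isOpen_compl_singleton.mem_nhds h)).differentiableAt (by simp)
  have hline : HasDerivAt (fun t : ℝ => p + t • u) u t₀ := by
    simpa using ((hasDerivAt_id t₀).smul_const u).const_add p
  exact hd.hasFDerivAt.comp_hasDerivAt t₀ hline

private lemma myLineDeriv2 {G : (Fin m → ℝ) → ℝ} (hG : ContDiffOn ℝ (⊤ : ℕ∞) G {(0 : Fin m → ℝ)}ᶜ)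
    (p u w : Fin m → ℝ) (t₀ : ℝ) (h : p + t₀ • u ≠ 0) :
    HasDerivAt (fun t : ℝ => fderiv ℝ G (p + t • u) w)
      (fderiv ℝ (fun x => fderiv ℝ G x w) (p + t₀ • u) u) t₀ := by
  have hG' : ContDiffOn ℝ (⊤ : ℕ∞) (fun x => fderiv ℝ G x) {(0 : Fin m → ℝ)}ᶜ :=
    hG.fderiv_of_isOpen isOpen_compl_singleton (by simp)
  have hd : DifferentiableAt ℝ (fun x => fderiv ℝ G x w) (p + t₀ • u) :=
    ((hG'.contDiffAt (isOpen_compl_singleton.mem_nhds h)).differentiableAt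
      (by simp)).clm_apply (differentiableAt_const w)
  have hline : HasDerivAt (fun t : ℝ => p + t • u) u t₀ := by
    simpa using ((hasDerivAt_id t₀).smul_const u).const_add p
  exact hd.hasFDerivAt.comp_hasDerivAt t₀ hline

private lemma myFundTensor_eq {F : (Fin m → ℝ) → ℝ}
    (hG : ContDiffOn ℝ (⊤ : ℕ∞) (fun x => F x ^ 2) {(0 : Fin m → ℝ)}ᶜ)
    {v : Fin m → ℝ} (hv : v ≠ 0) (u w : Fin m → ℝ) :
    fundTensor F v u w
      = (1 / 2) * fderiv ℝ (fun x => fderiv ℝ (fun y => F y ^ 2) x w) v u := by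
  set G : (Fin m → ℝ) → ℝ := fun x => F x ^ 2 with hGdef
  have hcont : Continuous (fun δ : ℝ => v + δ • u) := by continuity
  have hopen : ∀ᶠ δ in nhds (0:ℝ), v + δ • u ≠ 0 := by
    have : (fun δ : ℝ => v + δ • u) ⁻¹' {(0 : Fin m → ℝ)}ᶜ ∈ nhds (0:ℝ) := by
      apply (isOpen_compl_singleton.preimage hcont).mem_nhds
      simpa using hv
    filter_upwards [this] with δ hδ using hδ
  have hinner : (fun δ : ℝ => deriv (fun η : ℝ => G (v + δ • u + η • w)) 0)
      =ᶠ[nhds (0:ℝ)] (fun δ : ℝ => fderiv ℝ G (v + δ • u) w) := by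
    filter_upwards [hopen] with δ hδ
    have := myLineDeriv hG (v + δ • u) w 0 (by simpa using hδ)
    simpa using this.deriv
  have houter : HasDerivAt (fun δ : ℝ => fderiv ℝ G (v + δ • u) w)
      (fderiv ℝ (fun x => fderiv ℝ G x w) v u) 0 := by
    have := myLineDeriv2 hG v u w 0 (by simpa using hv)
    simpa using this
  have : deriv (fun δ : ℝ => deriv (fun η : ℝ => G (v + δ • u + η • w)) 0) 0
      = fderiv ℝ (fun x => fderiv ℝ G x w) v u := by
    rw [Filter.EventuallyEq.deriv_eq hinner, houter.deriv]
  unfold fundTensor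
  rw [show (fun δ : ℝ => deriv (fun η : ℝ => F (v + δ • u + η • w) ^ 2) 0)
      = (fun δ : ℝ => deriv (fun η : ℝ => G (v + δ • u + η • w)) 0) from rfl, this]

private lemma myFderivSmul {G : (Fin m → ℝ) → ℝ} (hG : ContDiffOn ℝ (⊤ : ℕ∞) G {(0 : Fin m → ℝ)}ᶜ)
    (hhom2 : ∀ x : Fin m → ℝ, ∀ lam : ℝ, 0 < lam → G (lam • x) = lam ^ 2 * G x)
    {v : Fin m → ℝ} (hv : v ≠ 0) {lam : ℝ} (hlam : 0 < lam) (w : Fin m → ℝ) :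
    fderiv ℝ G (lam • v) w = lam * fderiv ℝ G v w := by
  have hlv : lam • v ≠ 0 := smul_ne_zero hlam.ne' hv
  have hd : DifferentiableAt ℝ G (lam • v) :=
    (hG.contDiffAt (isOpen_compl_singleton.mem_nhds hlv)).differentiableAt (by simp)
  have hsm : HasFDerivAt (fun x : Fin m → ℝ => lam • x)
      (lam • ContinuousLinearMap.id ℝ (Fin m → ℝ)) v := (hasFDerivAt_id v).const_smul lam
  have hcomp : HasFDerivAt (fun x => G (lam • x))
      ((fderiv ℝ G (lam • v)).comp (lam • ContinuousLinearMap.id ℝ (Fin m → ℝ))) v :=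
    hd.hasFDerivAt.comp v hsm
  have heq : (fun x => G (lam • x)) = fun x => lam ^ 2 * G x := by
    funext x; exact hhom2 x lam hlam
  have hd2 : DifferentiableAt ℝ G v :=
    (hG.contDiffAt (isOpen_compl_singleton.mem_nhds hv)).differentiableAt (by simp)
  have hcomp2 : HasFDerivAt (fun x => lam ^ 2 * G x) (lam ^ 2 • fderiv ℝ G v) v :=
    hd2.hasFDerivAt.const_smul (lam ^ 2)
  rw [heq] at hcomp
  have := hcomp.unique hcomp2
  have happ := congrArg (fun L : (Fin m → ℝ) →L[ℝ] ℝ => L w) this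
  simp only [ContinuousLinearMap.comp_apply, ContinuousLinearMap.smul_apply,
    ContinuousLinearMap.id_apply, ContinuousLinearMap.map_smul] at happ
  have hl : lam * fderiv ℝ G (lam • v) w = lam * (lam * fderiv ℝ G v w) := by
    simpa [smul_eq_mul, pow_two, mul_assoc] using happ
  exact mul_left_cancel₀ hlam.ne' hl

private lemma myEuler {G : (Fin m → ℝ) → ℝ} (hG : ContDiffOn ℝ (⊤ : ℕ∞) G {(0 : Fin m → ℝ)}ᶜ)
    (hhom2 : ∀ x : Fin m → ℝ, ∀ lam : ℝ, 0 < lam → G (lam • x) = lam ^ 2 * G x)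
    {v : Fin m → ℝ} (hv : v ≠ 0) :
    fderiv ℝ G v v = 2 * G v := by
  have h1 : HasDerivAt (fun t : ℝ => G ((0 : Fin m → ℝ) + t • v)) (fderiv ℝ G v v) 1 := by
    have := myLineDeriv hG 0 v 1 (by simpa using hv)
    simpa using this
  have h1' : HasDerivAt (fun t : ℝ => G (t • v)) (fderiv ℝ G v v) 1 := by
    simpa using h1
  have hev : (fun t : ℝ => G (t • v)) =ᶠ[nhds (1:ℝ)] (fun t : ℝ => t ^ 2 * G v) := by
    have : ∀ᶠ t in nhds (1:ℝ), (0:ℝ) < t := eventually_gt_nhds one_pos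
    filter_upwards [this] with t ht using hhom2 v t ht
  have h2 : HasDerivAt (fun t : ℝ => t ^ 2 * G v) (2 * G v) 1 := by
    have := (hasDerivAt_pow 2 (1:ℝ)).mul_const (G v)
    simpa using this
  have := h1'.deriv
  rw [Filter.EventuallyEq.deriv_eq hev, h2.deriv] at this
  exact this.symm

private lemma myFundTensor_vv {F : (Fin m → ℝ) → ℝ}
    (hG : ContDiffOn ℝ (⊤ : ℕ∞) (fun x => F x ^ 2) {(0 : Fin m → ℝ)}ᶜ)
    (hhom2 : ∀ x : Fin m → ℝ, ∀ lam : ℝ, 0 < lam →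
      (fun x => F x ^ 2) (lam • x) = lam ^ 2 * (fun x => F x ^ 2) x)
    {v : Fin m → ℝ} (hv : v ≠ 0) (w : Fin m → ℝ) :
    fundTensor F v v w = (1 / 2) * fderiv ℝ (fun x => F x ^ 2) v w := by
  set G : (Fin m → ℝ) → ℝ := fun x => F x ^ 2 with hGdef
  have hpos' : ∀ᶠ δ in nhds (0:ℝ), (0:ℝ) < 1 + δ := by
    have : Continuous (fun δ : ℝ => 1 + δ) := by continuity
    have h01 : (fun δ : ℝ => 1 + δ) ⁻¹' Set.Ioi 0 ∈ nhds (0:ℝ) :=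
      (isOpen_Ioi.preimage this).mem_nhds (by norm_num)
    filter_upwards [h01] with δ hδ using hδ
  have hinner : (fun δ : ℝ => deriv (fun η : ℝ => G (v + δ • v + η • w)) 0)
      =ᶠ[nhds (0:ℝ)] (fun δ : ℝ => (1 + δ) * fderiv ℝ G v w) := by
    filter_upwards [hpos'] with δ hδ
    have hvv : v + δ • v = (1 + δ) • v := by rw [add_smul, one_smul]
    have hne : v + δ • v ≠ 0 := by rw [hvv]; exact smul_ne_zero hδ.ne' hv
    have h1 := myLineDeriv hG (v + δ • v) w 0 (by simpa using hne)
    have h2 : deriv (fun η : ℝ => G (v + δ • v + η • w)) 0 = fderiv ℝ G (v + δ • v) w := by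
      simpa using h1.deriv
    rw [h2, hvv, myFderivSmul hG hhom2 hv hδ w]
  have houter : HasDerivAt (fun δ : ℝ => (1 + δ) * fderiv ℝ G v w) (fderiv ℝ G v w) 0 := by
    simpa using (((hasDerivAt_id (0:ℝ)).const_add 1).mul_const (fderiv ℝ G v w))
  have : deriv (fun δ : ℝ => deriv (fun η : ℝ => G (v + δ • v + η • w)) 0) 0
      = fderiv ℝ G v w := by
    rw [Filter.EventuallyEq.deriv_eq hinner, houter.deriv]
  unfold fundTensor
  rw [show (fun δ : ℝ => deriv (fun η : ℝ => F (v + δ • v + η • w) ^ 2) 0)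
      = (fun δ : ℝ => deriv (fun η : ℝ => G (v + δ • v + η • w)) 0) from rfl, this]

private lemma mySegKey {F : (Fin m → ℝ) → ℝ}
    (hG : ContDiffOn ℝ (⊤ : ℕ∞) (fun x => F x ^ 2) {(0 : Fin m → ℝ)}ᶜ)
    (hhom2 : ∀ x : Fin m → ℝ, ∀ lam : ℝ, 0 < lam →
      (fun x => F x ^ 2) (lam • x) = lam ^ 2 * (fun x => F x ^ 2) x)
    (hposdef : ∀ v : Fin m → ℝ, v ≠ 0 → ∀ u : Fin m → ℝ, u ≠ 0 → 0 < fundTensor F v u u)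
    {v₁ v₂ : Fin m → ℝ} (h1 : F v₁ ^ 2 = 1) (h2 : F v₂ ^ 2 = 1)
    (hneq : v₁ ≠ v₂) (hseg : ∀ t ∈ Set.Icc (0:ℝ) 1, v₁ + t • (v₂ - v₁) ≠ 0) :
    fundTensor F v₁ v₁ v₂ < 1 := by
  set G : (Fin m → ℝ) → ℝ := fun x => F x ^ 2 with hGdef
  set w : Fin m → ℝ := v₂ - v₁ with hwdef
  have hw : w ≠ 0 := sub_ne_zero.mpr (Ne.symm hneq)
  have hv₁ : v₁ ≠ 0 := by simpa using hseg 0 (by norm_num)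
  set ψ : ℝ → ℝ := fun t => G (v₁ + t • w) with hψdef
  set φ : ℝ → ℝ := fun t => fderiv ℝ G (v₁ + t • w) w with hφdef
  have hline : Continuous (fun t : ℝ => v₁ + t • w) := by continuity
  have hmaps : Set.MapsTo (fun t : ℝ => v₁ + t • w) (Set.Icc 0 1) {(0 : Fin m → ℝ)}ᶜ :=
    fun t ht => hseg t ht
  have hderiv : ∀ t : ℝ, v₁ + t • w ≠ 0 → deriv ψ t = φ t := fun t ht =>
    (myLineDeriv hG v₁ w t ht).deriv
  have hφcont : ContinuousOn φ (Set.Icc 0 1) :=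
    (((hG.continuousOn_fderiv_of_isOpen isOpen_compl_singleton (by simp)).comp
      hline.continuousOn hmaps).clm_apply continuousOn_const)
  have hψ'cont : ContinuousOn (deriv ψ) (Set.Icc 0 1) :=
    hφcont.congr fun t ht => hderiv t (hseg t ht)
  have hψcont : ContinuousOn ψ (Set.Icc 0 1) :=
    hG.continuousOn.comp hline.continuousOn hmaps
  have hmono : StrictMonoOn (deriv ψ) (Set.Icc 0 1) := by
    apply strictMonoOn_of_deriv_pos (convex_Icc 0 1) hψ'cont
    intro t ht
    rw [interior_Icc] at ht
    have htI : t ∈ Set.Icc (0:ℝ) 1 := Set.Ioo_subset_Icc_self ht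
    have hne : v₁ + t • w ≠ 0 := hseg t htI
    have hevnhds : ∀ᶠ s in nhds t, v₁ + s • w ≠ 0 := by
      have : (fun s : ℝ => v₁ + s • w) ⁻¹' {(0 : Fin m → ℝ)}ᶜ ∈ nhds t :=
        (isOpen_compl_singleton.preimage hline).mem_nhds (by simpa using hne)
      filter_upwards [this] with s hs using hs
    have hev : deriv ψ =ᶠ[nhds t] φ := by
      filter_upwards [hevnhds] with s hs using hderiv s hs
    have hd2 : deriv φ t = fderiv ℝ (fun x => fderiv ℝ G x w) (v₁ + t • w) w :=
      (myLineDeriv2 hG v₁ w w t hne).deriv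
    have hft := myFundTensor_eq hG hne w w
    have hpos := hposdef _ hne w hw
    rw [Filter.EventuallyEq.deriv_eq hev, hd2]
    rw [hft] at hpos
    linarith
  obtain ⟨c, hc, hc0⟩ := exists_deriv_eq_zero one_pos hψcont (by
    show ψ 0 = ψ 1
    have e0 : ψ 0 = 1 := by simp [hψdef, hGdef, h1]
    have e1 : ψ 1 = 1 := by
      have : v₁ + (1:ℝ) • w = v₂ := by simp [hwdef]
      show G (v₁ + (1:ℝ) • w) = 1
      rw [this]; exact h2
    rw [e0, e1])
  have hlt : deriv ψ 0 < deriv ψ c :=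
    hmono (Set.left_mem_Icc.mpr zero_le_one) (Set.Ioo_subset_Icc_self hc) hc.1
  rw [hc0] at hlt
  have h0 : deriv ψ 0 = fderiv ℝ G v₁ w := by
    have := hderiv 0 (by simpa using hv₁)
    simpa [hφdef] using this
  rw [h0] at hlt
  have hsub : fderiv ℝ G v₁ w = fderiv ℝ G v₁ v₂ - fderiv ℝ G v₁ v₁ := by
    rw [hwdef]; exact (fderiv ℝ G v₁).map_sub v₂ v₁
  have heu : fderiv ℝ G v₁ v₁ = 2 * G v₁ := myEuler hG hhom2 hv₁
  have hvv := myFundTensor_vv hG hhom2 hv₁ v₂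
  have hGv₁ : G v₁ = 1 := h1
  rw [hsub, heu, hGv₁] at hlt
  rw [hvv]
  linarith

end Aux

/-- The Legendre map `v ↦ g_v(v,·)` is injective on the indicatrix
`Σ = {F = 1}` up to positive rescaling; in particular, for each covector `ω ≠ 0` which is
positive on some vector there is at most one `v ∈ Σ` with `g_v(v,·)` positively
proportional to `ω`. -/
theorem stmt4 {m : ℕ} (F : (Fin m → ℝ) → ℝ)
    (hpos : ∀ v : Fin m → ℝ, v ≠ 0 → 0 < F v)
    (hhom : ∀ v : Fin m → ℝ, ∀ lam : ℝ, 0 < lam → F (lam • v) = lam * F v)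
    (hsmooth : ContDiffOn ℝ (⊤ : ℕ∞) F {(0 : Fin m → ℝ)}ᶜ)
    (hposdef : ∀ v : Fin m → ℝ, v ≠ 0 → ∀ u : Fin m → ℝ, u ≠ 0 →
      0 < fundTensor F v u u) :
    (∀ v₁ v₂ : Fin m → ℝ, F v₁ = 1 → F v₂ = 1 →
      (∃ c : ℝ, 0 < c ∧ ∀ u : Fin m → ℝ,
        fundTensor F v₁ v₁ u = c * fundTensor F v₂ v₂ u) → v₁ = v₂) ∧
    ∀ ω : Module.Dual ℝ (Fin m → ℝ), ω ≠ 0 → (∃ v : Fin m → ℝ, 0 < ω v) →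
      ∀ v₁ v₂ : Fin m → ℝ, F v₁ = 1 → F v₂ = 1 →
        (∃ c : ℝ, 0 < c ∧ ∀ u : Fin m → ℝ, fundTensor F v₁ v₁ u = c * ω u) →
        (∃ c : ℝ, 0 < c ∧ ∀ u : Fin m → ℝ, fundTensor F v₂ v₂ u = c * ω u) →
        v₁ = v₂ := by
  have hG : ContDiffOn ℝ (⊤ : ℕ∞) (fun x => F x ^ 2) {(0 : Fin m → ℝ)}ᶜ := hsmooth.pow 2
  have hhom2 : ∀ x : Fin m → ℝ, ∀ lam : ℝ, 0 < lam →
      (fun x => F x ^ 2) (lam • x) = lam ^ 2 * (fun x => F x ^ 2) x := by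
    intro x lam hlam
    simp only []
    rw [hhom x lam hlam]; ring
  have hF0 : F 0 = 0 := by
    have h := hhom 0 2 (by norm_num)
    rw [smul_zero] at h; linarith
  have hvne : ∀ v : Fin m → ℝ, F v = 1 → v ≠ 0 := by
    intro v hv h0
    rw [h0, hF0] at hv; norm_num at hv
  -- fundTensor F v v v = 1 on the indicatrix:
  have hdiag : ∀ v : Fin m → ℝ, F v = 1 → fundTensor F v v v = 1 := by
    intro v hv
    have hvne' := hvne v hv
    rw [myFundTensor_vv hG hhom2 hvne' v, myEuler hG hhom2 hvne']
    show 1 / 2 * (2 * F v ^ 2) = 1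
    rw [hv]; norm_num
  have main : ∀ v₁ v₂ : Fin m → ℝ, F v₁ = 1 → F v₂ = 1 →
      (∃ c : ℝ, 0 < c ∧ ∀ u : Fin m → ℝ,
        fundTensor F v₁ v₁ u = c * fundTensor F v₂ v₂ u) → v₁ = v₂ := by
    intro v₁ v₂ h1 h2 ⟨c, hc, hprop⟩
    by_contra hneq
    have hv₁ := hvne v₁ h1
    have hv₂ := hvne v₂ h2
    have h1sq : F v₁ ^ 2 = 1 := by rw [h1]; norm_num
    have h2sq : F v₂ ^ 2 = 1 := by rw [h2]; norm_num
    by_cases hzero : ∃ t ∈ Set.Icc (0:ℝ) 1, v₁ + t • (v₂ - v₁) = 0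
    · -- segment through origin: v₁ is a negative multiple of v₂
      obtain ⟨t, htI, heq⟩ := hzero
      have ht0 : t ≠ 0 := by
        intro h
        rw [h, zero_smul, add_zero] at heq
        exact hv₁ heq
      have ht1 : t ≠ 1 := by
        intro h
        rw [h] at heq
        have : v₂ = 0 := by
          have h2' : v₂ = v₁ + (1:ℝ) • (v₂ - v₁) := by module
          rw [h2', heq]
        exact hv₂ this
      have htlt : t < 1 := lt_of_le_of_ne htI.2 ht1
      have htpos : 0 < t := lt_of_le_of_ne htI.1 (Ne.symm ht0)
      have ht1' : (1:ℝ) - t ≠ 0 := by intro h; apply ht1; linarith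
      -- from heq : v₁ + t•(v₂ - v₁) = 0, get v₁ = (t/(t-1)) • v₂
      have hkey : v₁ = ((t / (t - 1)) : ℝ) • v₂ := by
        have h' : (1 - t) • v₁ = (-t) • v₂ := by
          have hz : (1 - t) • v₁ - (-t) • v₂ = v₁ + t • (v₂ - v₁) := by module
          rw [heq] at hz
          exact sub_eq_zero.mp hz
        have hv := congrArg (fun x => ((1 - t)⁻¹ : ℝ) • x) h'
        simp only [smul_smul, inv_mul_cancel₀ ht1', one_smul] at hv
        rw [hv]
        congr 1
        rw [eq_div_iff (sub_ne_zero.mpr ht1)]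
        rw [show ((1:ℝ) - t)⁻¹ * -t * (t - 1) = (1 - t)⁻¹ * (1 - t) * t from by ring,
          inv_mul_cancel₀ ht1', one_mul]
      have hfact : t / (t - 1) < 0 :=
        div_neg_of_pos_of_neg htpos (by linarith)
      -- fundTensor F v₂ v₂ v₁ < 0
      have hneg : fundTensor F v₂ v₂ v₁ < 0 := by
        rw [myFundTensor_vv hG hhom2 hv₂ v₁, hkey]
        rw [(fderiv ℝ (fun x => F x ^ 2) v₂).map_smul]
        rw [smul_eq_mul, myEuler hG hhom2 hv₂]
        show 1 / 2 * (t / (t - 1) * (2 * F v₂ ^ 2)) < 0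
        rw [h2sq]
        nlinarith [hfact]
      have := hprop v₁
      rw [hdiag v₁ h1] at this
      nlinarith
    · push_neg at hzero
      have hseg : ∀ t ∈ Set.Icc (0:ℝ) 1, v₁ + t • (v₂ - v₁) ≠ 0 := hzero
      have hseg' : ∀ t ∈ Set.Icc (0:ℝ) 1, v₂ + t • (v₁ - v₂) ≠ 0 := by
        intro t ht
        have h1t : (1 - t) ∈ Set.Icc (0:ℝ) 1 := ⟨by linarith [ht.2], by linarith [ht.1]⟩
        have := hseg (1 - t) h1t
        have heq : v₂ + t • (v₁ - v₂) = v₁ + (1 - t) • (v₂ - v₁) := by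
          module
        rw [heq]; exact this
      have k12 : fundTensor F v₁ v₁ v₂ < 1 := mySegKey hG hhom2 hposdef h1sq h2sq hneq hseg
      have k21 : fundTensor F v₂ v₂ v₁ < 1 :=
        mySegKey hG hhom2 hposdef h2sq h1sq (Ne.symm hneq) hseg'
      have e1 := hprop v₁
      have e2 := hprop v₂
      rw [hdiag v₁ h1] at e1
      rw [hdiag v₂ h2] at e2
      -- e1 : 1 = c * fundTensor F v₂ v₂ v₁, with fundTensor F v₂ v₂ v₁ < 1 ⇒ 1 < c
      -- e2 : fundTensor F v₁ v₁ v₂ = c * 1 = c < 1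
      nlinarith
  refine ⟨main, ?_⟩
  intro ω hω hpω v₁ v₂ h1 h2 ⟨c₁, hc₁, hp₁⟩ ⟨c₂, hc₂, hp₂⟩
  apply main v₁ v₂ h1 h2
  refine ⟨c₁ / c₂, div_pos hc₁ hc₂, fun u => ?_⟩
  rw [hp₁ u, hp₂ u]
  field_simp
end
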